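/- Let k ≥ 2 be an integer, δ ∈ (0,1), and R a real number with 1 ≤ R ≤ k, set D = ⌊k/R⌋ with D ≥ 2, and let Ω_R be the Robust Soliton distribution. Then the mean degree satisfies ∑_{d=1}^{k} d·Ω_R(d) ≤ 3 + ln k + ln(R/δ); in particular the average degree of an encoded packet under the Robust Soliton distribution is O(log(k/δ)). -/

import Mathlib

/-- The Ideal Soliton distribution on `{1, …, k}`:
`Ω_I(1) = 1/k` and `Ω_I(d) = 1/(d(d−1))` for `d = 2, …, k`. -/
noncomputable def idealSoliton (k d : ℕ) : ℝ :=
  if d = 1 then 1 / (k : ℝ) else 1 / ((d : ℝ) * ((d : ℝ) - 1))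

/-- The function `τ` from the Robust Soliton construction: with `D = ⌊k/R⌋`,
`τ(d) = R/(dk)` for `1 ≤ d ≤ D−1`, `τ(D) = R·ln(R/δ)/k`, and `τ(d) = 0` for `D < d ≤ k`. -/
noncomputable def tauRS (k : ℕ) (R δ : ℝ) (d : ℕ) : ℝ :=
  if d < ⌊(k : ℝ) / R⌋₊ then R / ((d : ℝ) * (k : ℝ))
  else if d = ⌊(k : ℝ) / R⌋₊ then R * Real.log (R / δ) / (k : ℝ)
  else 0

/-- The normalizing constant `β = ∑_{i=1}^{k} (τ(i) + Ω_I(i))`. -/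
noncomputable def betaRS (k : ℕ) (R δ : ℝ) : ℝ :=
  ∑ i ∈ Finset.Icc 1 k, (tauRS k R δ i + idealSoliton k i)

/-- The Robust Soliton distribution `Ω_R(d) = (τ(d) + Ω_I(d))/β`. -/
noncomputable def robustSoliton (k : ℕ) (R δ : ℝ) (d : ℕ) : ℝ :=
  (tauRS k R δ d + idealSoliton k d) / betaRS k R δ

/-!
Because `Ω_I` sums to `1` and `τ ≥ 0`, the normaliser `β` is at least `1`, so the mean of `Ω_R`
is at most `∑ d τ(d) + ∑ d Ω_I(d)`. The ideal part equals `1/k + H_{k-1} ≤ 2 + ln k`, and the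
robust part equals `((D - 1) + D ln(R/δ)) R / k ≤ 1 + ln(R/δ)`, because `D R ≤ k`.
-/

open Finset

lemma idealSoliton_nonneg (k d : ℕ) : 0 ≤ idealSoliton k d := by
  unfold idealSoliton
  split_ifs
  · positivity
  · rcases d with _ | d
    · simp
    · push_cast
      rw [add_sub_cancel_right]
      positivity

lemma idealSoliton_of_two_le {k d : ℕ} (hd : 2 ≤ d) :
    idealSoliton k d = 1 / ((d : ℝ) * ((d : ℝ) - 1)) := by
  rw [idealSoliton, if_neg (by omega)]

lemma sum_Icc_two_one_div_mul_pred (n : ℕ) (hn : 1 ≤ n) :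
    ∑ d ∈ Icc 2 n, 1 / ((d : ℝ) * ((d : ℝ) - 1)) = 1 - 1 / n := by
  induction n, hn using Nat.le_induction with
  | base => simp
  | succ n hn ih =>
    rw [sum_Icc_succ_top (by omega), ih]
    have hn0 : (n : ℝ) ≠ 0 := by positivity
    push_cast
    rw [add_sub_cancel_right]
    field_simp
    ring

lemma sum_idealSoliton {k : ℕ} (hk : 1 ≤ k) : ∑ d ∈ Icc 1 k, idealSoliton k d = 1 := by
  rw [← insert_Icc_add_one_left_eq_Icc hk, sum_insert (by simp), one_add_one_eq_two,
    sum_congr rfl fun d hd => idealSoliton_of_two_le (mem_Icc.1 hd).1,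
    sum_Icc_two_one_div_mul_pred k hk, idealSoliton, if_pos rfl]
  ring

lemma sum_Icc_two_one_div_pred (n : ℕ) :
    ∑ d ∈ Icc 2 (n + 1), 1 / ((d : ℝ) - 1) = harmonic n := by
  rw [← map_add_right_Icc 1 n 1, sum_map]
  simp [harmonic_eq_sum_Icc]

lemma sum_mul_idealSoliton {k : ℕ} (hk : 1 ≤ k) :
    ∑ d ∈ Icc 1 k, (d : ℝ) * idealSoliton k d = 1 / k + harmonic (k - 1) := by
  obtain ⟨n, rfl⟩ : ∃ n, k = n + 1 := ⟨k - 1, by omega⟩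
  rw [← insert_Icc_add_one_left_eq_Icc hk, sum_insert (by simp), one_add_one_eq_two,
    ← sum_Icc_two_one_div_pred,
    idealSoliton, if_pos rfl, Nat.add_sub_cancel, Nat.cast_one, one_mul]
  congr 1
  refine sum_congr rfl fun d hd => ?_
  have hd2 : (2 : ℝ) ≤ d := by exact_mod_cast (mem_Icc.1 hd).1
  rw [idealSoliton_of_two_le (mem_Icc.1 hd).1]
  field_simp [show (d : ℝ) - 1 ≠ 0 by linarith]

lemma sum_mul_idealSoliton_le {k : ℕ} (hk : 1 ≤ k) :
    ∑ d ∈ Icc 1 k, (d : ℝ) * idealSoliton k d ≤ 2 + Real.log k := by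
  have hk' : (1 : ℝ) ≤ k := by exact_mod_cast hk
  have h_inv : 1 / (k : ℝ) ≤ 1 := by rw [div_le_one (by positivity)]; exact hk'
  have h_log : Real.log ((k - 1 : ℕ) : ℝ) ≤ Real.log k := by
    rcases Nat.eq_zero_or_pos (k - 1) with h | h
    · rw [h, Nat.cast_zero, Real.log_zero]; exact Real.log_nonneg hk'
    · exact Real.log_le_log (by exact_mod_cast h) (by exact_mod_cast Nat.sub_le k 1)
  rw [sum_mul_idealSoliton hk]
  linarith [harmonic_le_one_add_log (k - 1)]

lemma natFloor_div_mul_le {a R : ℝ} (ha : 0 ≤ a) (hR : 0 < R) : (⌊a / R⌋₊ : ℝ) * R ≤ a :=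
  (le_div_iff₀ hR).1 (Nat.floor_le (by positivity))

section RobustSoliton

variable {k : ℕ} {R δ : ℝ}

lemma tauRS_nonneg (hR : 0 ≤ R) (hL : 0 ≤ Real.log (R / δ)) (d : ℕ) : 0 ≤ tauRS k R δ d := by
  unfold tauRS
  split_ifs <;> positivity

lemma natCast_mul_tauRS_of_lt {d : ℕ} (hd : d ≠ 0) (h : d < ⌊(k : ℝ) / R⌋₊) :
    (d : ℝ) * tauRS k R δ d = R / k := by
  rw [tauRS, if_pos h, ← mul_div_assoc, mul_div_mul_left _ _ (by exact_mod_cast hd)]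

lemma tauRS_floor : tauRS k R δ ⌊(k : ℝ) / R⌋₊ = R * Real.log (R / δ) / k := by
  simp [tauRS]

lemma tauRS_of_floor_lt {d : ℕ} (h : ⌊(k : ℝ) / R⌋₊ < d) : tauRS k R δ d = 0 := by
  rw [tauRS, if_neg (by omega), if_neg (by omega)]

lemma sum_mul_tauRS_le_sum_Icc_floor (hR : 0 ≤ R) (hL : 0 ≤ Real.log (R / δ)) :
    ∑ d ∈ Icc 1 k, (d : ℝ) * tauRS k R δ d ≤
      ∑ d ∈ Icc 1 ⌊(k : ℝ) / R⌋₊, (d : ℝ) * tauRS k R δ d := by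
  rw [← sum_filter_of_ne (p := (· ≤ ⌊(k : ℝ) / R⌋₊)) fun d _ hd => by
    by_contra h
    exact hd (by rw [tauRS_of_floor_lt (not_le.1 h), mul_zero])]
  refine sum_le_sum_of_subset_of_nonneg (fun d hd => ?_) fun d _ _ =>
    mul_nonneg d.cast_nonneg (tauRS_nonneg hR hL d)
  simp only [mem_filter, mem_Icc] at hd ⊢
  omega

lemma sum_Icc_floor_mul_tauRS {m : ℕ} (hm : ⌊(k : ℝ) / R⌋₊ = m + 1) :
    ∑ d ∈ Icc 1 (m + 1), (d : ℝ) * tauRS k R δ d =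
      m * (R / k) + (m + 1) * (R * Real.log (R / δ) / k) := by
  rw [sum_Icc_succ_top (by omega), ← hm, tauRS_floor, hm,
    sum_congr rfl fun d hd => natCast_mul_tauRS_of_lt (by grind) (by grind),
    sum_const, Nat.card_Icc, nsmul_eq_mul]
  push_cast
  ring

lemma sum_mul_tauRS_le (hR : 0 < R) (hL : 0 ≤ Real.log (R / δ)) :
    ∑ d ∈ Icc 1 k, (d : ℝ) * tauRS k R δ d ≤ 1 + Real.log (R / δ) := by
  refine (sum_mul_tauRS_le_sum_Icc_floor hR.le hL).trans ?_
  rcases Nat.eq_zero_or_pos ⌊(k : ℝ) / R⌋₊ with h0 | hpos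
  · simp only [h0, zero_lt_one, Icc_eq_empty_of_lt, sum_empty]
    linarith
  obtain ⟨m, hm⟩ := Nat.exists_eq_add_one_of_ne_zero hpos.ne'
  have hmR : ((m : ℝ) + 1) * R ≤ k := by
    have := natFloor_div_mul_le k.cast_nonneg hR
    rwa [hm, Nat.cast_add_one] at this
  have hk : (0 : ℝ) < k := by nlinarith
  have h_lt : (m : ℝ) * (R / k) ≤ 1 := by
    rw [← mul_div_assoc, div_le_one hk]
    nlinarith
  have h_floor : ((m : ℝ) + 1) * (R * Real.log (R / δ) / k) ≤ Real.log (R / δ) := by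
    rw [← mul_div_assoc, div_le_iff₀ hk]
    nlinarith
  rw [hm, sum_Icc_floor_mul_tauRS hm]
  linarith

lemma one_le_betaRS (hk : 1 ≤ k) (hR : 0 ≤ R) (hL : 0 ≤ Real.log (R / δ)) :
    1 ≤ betaRS k R δ := by
  rw [betaRS, sum_add_distrib, sum_idealSoliton hk, le_add_iff_nonneg_left]
  exact sum_nonneg fun d _ => tauRS_nonneg hR hL d

lemma sum_mul_robustSoliton_le (hk : 1 ≤ k) (hR : 0 ≤ R) (hL : 0 ≤ Real.log (R / δ)) :
    ∑ d ∈ Icc 1 k, (d : ℝ) * robustSoliton k R δ d ≤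
      ∑ d ∈ Icc 1 k, (d : ℝ) * tauRS k R δ d + ∑ d ∈ Icc 1 k, (d : ℝ) * idealSoliton k d := by
  have h_num : 0 ≤ ∑ d ∈ Icc 1 k, (d : ℝ) * (tauRS k R δ d + idealSoliton k d) :=
    sum_nonneg fun d _ =>
      mul_nonneg d.cast_nonneg (add_nonneg (tauRS_nonneg hR hL d) (idealSoliton_nonneg k d))
  calc ∑ d ∈ Icc 1 k, (d : ℝ) * robustSoliton k R δ d
      = (∑ d ∈ Icc 1 k, (d : ℝ) * (tauRS k R δ d + idealSoliton k d)) / betaRS k R δ := by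
        simp only [robustSoliton, sum_div, mul_div_assoc]
    _ ≤ ∑ d ∈ Icc 1 k, (d : ℝ) * (tauRS k R δ d + idealSoliton k d) :=
        div_le_self h_num (one_le_betaRS hk hR hL)
    _ = _ := by simp only [mul_add, sum_add_distrib]

end RobustSoliton

theorem robustSoliton_mean_le_general (k : ℕ) (hk : 2 ≤ k) (δ R : ℝ)
    (hδ : δ ∈ Set.Ioo (0 : ℝ) 1) (hR1 : 1 ≤ R) :
    ∑ d ∈ Finset.Icc 1 k, (d : ℝ) * robustSoliton k R δ d
      ≤ 3 + Real.log (k : ℝ) + Real.log (R / δ) := by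
  obtain ⟨hδ0, hδ1⟩ := hδ
  have hR : 0 < R := by linarith
  have hL : 0 ≤ Real.log (R / δ) := Real.log_nonneg ((one_le_div hδ0).2 (by linarith))
  calc ∑ d ∈ Icc 1 k, (d : ℝ) * robustSoliton k R δ d
      ≤ ∑ d ∈ Icc 1 k, (d : ℝ) * tauRS k R δ d + ∑ d ∈ Icc 1 k, (d : ℝ) * idealSoliton k d :=
        sum_mul_robustSoliton_le (by omega) hR.le hL
    _ ≤ (1 + Real.log (R / δ)) + (2 + Real.log k) :=
        add_le_add (sum_mul_tauRS_le hR hL) (sum_mul_idealSoliton_le (by omega))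
    _ = _ := by ring

/-- Let `k ≥ 2` be an integer, `δ ∈ (0,1)`, and `R` real with `1 ≤ R ≤ k`,
set `D = ⌊k/R⌋` with `D ≥ 2`, and let `Ω_R` be the Robust Soliton distribution. Then the
mean degree satisfies `∑_{d=1}^{k} d·Ω_R(d) ≤ 3 + ln k + ln(R/δ)`. -/
theorem robustSoliton_mean_le (k : ℕ) (hk : 2 ≤ k) (δ R : ℝ)
    (hδ : δ ∈ Set.Ioo (0 : ℝ) 1) (hR1 : 1 ≤ R) (hRk : R ≤ (k : ℝ))
    (hD : 2 ≤ ⌊(k : ℝ) / R⌋₊) :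
    ∑ d ∈ Finset.Icc 1 k, (d : ℝ) * robustSoliton k R δ d
      ≤ 3 + Real.log (k : ℝ) + Real.log (R / δ) :=
  robustSoliton_mean_le_general k hk δ R hδ hR1
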